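/- Let X be a 3-Hausdorff homogeneous space. Then |X| ≤ 2^{2^{c(X)·πχ(X)}}. -/

import Mathlib

open Cardinal Set

/-- The cellularity of `X`: the supremum of the cardinalities of pairwise
disjoint families of nonempty open sets, taken at least `ℵ₀`. -/
noncomputable def cellularity (X : Type u) [TopologicalSpace X] : Cardinal.{u} :=
  max ℵ₀ (⨆ 𝒰 : {𝒰 : Set (Set X) //
    (∀ U ∈ 𝒰, IsOpen U ∧ U.Nonempty) ∧ 𝒰.PairwiseDisjoint id}, #𝒰.1)

/-- `B` is a local π-base at `x`: a family of nonempty open sets such that every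
open neighbourhood of `x` contains a member of `B`. -/
def IsLocalPiBase {X : Type u} [TopologicalSpace X] (x : X) (B : Set (Set X)) : Prop :=
  (∀ U ∈ B, IsOpen U ∧ U.Nonempty) ∧ ∀ V : Set X, IsOpen V → x ∈ V → ∃ U ∈ B, U ⊆ V

/-- The π-character of `X`: the supremum over `x ∈ X` of the least cardinality
of a local π-base at `x`, taken at least `ℵ₀`. -/
noncomputable def piCharacter (X : Type u) [TopologicalSpace X] : Cardinal.{u} :=
  max ℵ₀ (⨆ x : X, sInf {κ | ∃ B : Set (Set X), IsLocalPiBase x B ∧ #B = κ})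

/-- A space is homogeneous if for all `x, y` some self-homeomorphism maps `x`
to `y`. -/
def Homogeneous (X : Type*) [TopologicalSpace X] : Prop :=
  ∀ x y : X, ∃ h : X ≃ₜ X, h x = y

/-- A space is 3-Hausdorff if any three distinct points admit open
neighbourhoods with empty intersection. -/
def ThreeHausdorff (X : Type*) [TopologicalSpace X] : Prop :=
  ∀ x y z : X, x ≠ y → x ≠ z → y ≠ z →
    ∃ U V W : Set X, IsOpen U ∧ IsOpen V ∧ IsOpen W ∧
      x ∈ U ∧ y ∈ V ∧ z ∈ W ∧ U ∩ V ∩ W = ∅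

/-!
Transport a local π-base `B` at a point `p`, with `#B ≤ πχ(X)`, to every point `x` by a
homeomorphism `φ x` sending `p` to `x`. Given distinct `x, y, z`, pull back along `φ x, φ y, φ z`
neighbourhoods of the three points with empty common intersection: some `b ∈ B` lies inside all
three pullbacks, so the translates `φ x '' b`, `φ y '' b`, `φ z '' b` have empty intersection.
Colouring each triple by such a `b`, the Erdős–Rado theorem `2^(2^κ) → (κ⁺)³_κ` with
`κ = c(X)·πχ(X)` turns `2^(2^κ) < #X` into a set `H` of more than `κ` points sharing one colour
`b`. The open sets `φ x '' b`, `x ∈ H`, then cover no point three times, and such a family has at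
most `c(X)` members.

Erdős–Rado itself goes by induction on the exponent: given `f : [α]ⁿ⁺² → C` with `#α > 2^μ`,
build an injective sequence `g` of length `μ⁺` which is end-homogeneous (the colour of
`{g l} ∪ g '' t` for `t` below `l` does not depend on `l`), and apply the induction hypothesis to
the induced colouring of `[μ⁺]ⁿ⁺¹`.
-/

universe u

namespace Cardinal

theorem mk_finset_le_max (α : Type u) : #(Finset α) ≤ max ℵ₀ #α := by
  classical exact (mk_le_of_surjective List.toFinset_surjective).trans (mk_list_le_max α)

theorem mk_le_two_of_forall_eq_or_eq {α : Type u} {s : Set α}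
    (h : ∀ a ∈ s, ∀ b ∈ s, ∀ c ∈ s, a = b ∨ a = c ∨ b = c) : #s ≤ 2 := by
  rcases s.eq_empty_or_nonempty with rfl | ⟨a, ha⟩
  · simp
  by_cases hb : ∃ b ∈ s, b ≠ a
  · obtain ⟨b, hb, hba⟩ := hb
    have hsub : s ⊆ {a, b} := fun c hc => by
      rcases h a ha b hb c hc with hab | hac | hbc
      exacts [absurd hab.symm hba, Or.inl hac.symm, Or.inr hbc.symm]
    calc #s ≤ #({a, b} : Set α) := mk_le_mk_of_subset hsub
      _ ≤ #({b} : Set α) + 1 := mk_insert_le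
      _ = 2 := by rw [mk_singleton]; norm_num
  · push Not at hb
    calc #s ≤ #({a} : Set α) := mk_le_mk_of_subset hb
      _ ≤ 2 := by rw [mk_singleton]; norm_num

end Cardinal

namespace ErdosRado

variable {α σ C : Type u}

section Chain

variable [DecidableEq α] [LinearOrder σ] (f : Finset α → C)

/-- The possible `i`-th terms of the chain through `β`, given its earlier terms `g`. -/
def admissible (β : α) (g : σ → α) (i : σ) : Set α :=
  {a | (∀ j < i, g j ≠ a) ∧
    ∀ t : Finset σ, (∀ j ∈ t, j < i) → f (insert a (t.image g)) = f (insert β (t.image g))}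

lemma admissible_congr_seq (β : α) {g g' : σ → α} {i : σ} (h : ∀ j < i, g j = g' j) :
    admissible f β g i = admissible f β g' i := by
  ext a
  refine and_congr (forall₂_congr fun j hj => by rw [h j hj]) (forall₂_congr fun t ht => ?_)
  rw [Finset.image_congr fun j hj => h j (ht j hj)]

lemma admissible_congr_base {β β' : α} {g : σ → α} {i : σ}
    (h : ∀ t : Finset σ, (∀ j ∈ t, j < i) →
      f (insert β (t.image g)) = f (insert β' (t.image g))) :
    admissible f β g i = admissible f β' g i := by
  ext a
  exact and_congr_right fun _ => forall₂_congr fun t ht => by rw [h t ht]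

variable [WellFoundedLT σ] [Nonempty α]

noncomputable def chain (β : α) : σ → α :=
  wellFounded_lt.fix fun i rec =>
    Classical.epsilon (· ∈ admissible f β (fun j => if hj : j < i then rec j hj else β) i)

lemma chain_eq (β : α) (i : σ) :
    chain f β i = Classical.epsilon (· ∈ admissible f β (chain f β) i) := by
  unfold chain
  rw [WellFounded.fix_eq]
  exact congrArg (fun s => Classical.epsilon (· ∈ s))
    (admissible_congr_seq f β fun j hj => dif_pos hj)

lemma chain_mem_admissible {β : α} (hβ : ∀ i : σ, chain f β i ≠ β) (i : σ) :
    chain f β i ∈ admissible f β (chain f β) i := by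
  rw [chain_eq]
  exact Classical.epsilon_spec ⟨β, fun j _ => hβ j, fun _ _ => rfl⟩

lemma chain_eq_chain {β β' : α} {i : σ}
    (h : ∀ t : Finset σ, (∀ j ∈ t, j < i) →
      f (insert β (t.image (chain f β))) = f (insert β' (t.image (chain f β')))) :
    ∀ m ≤ i, chain f β m = chain f β' m := by
  intro m
  induction m using WellFoundedLT.induction with
  | _ m ih =>
    intro hm
    have hagree : ∀ j < m, chain f β j = chain f β' j := fun j hj => ih j hj (hj.le.trans hm)
    rw [chain_eq, chain_eq, admissible_congr_seq f β hagree, admissible_congr_base f fun t ht => ?_]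
    rw [← h t fun j hj => (ht j hj).trans_le hm, Finset.image_congr fun j hj => hagree j (ht j hj)]

/-- If every `β` occurs in its own chain, then `β` is recovered from the place `i` where it
occurs and from the colours `f ({β} ∪ chain f β '' t)`, `t ⊆ Iio i`. -/
theorem mk_le_mul_power_of_forall_exists_chain_eq {μ : Cardinal.{u}} (hμ : ℵ₀ ≤ μ)
    (hIio : ∀ i : σ, #(Iio i) ≤ μ) (h : ∀ β, ∃ i : σ, chain f β i = β) :
    #α ≤ #σ * #C ^ μ := by
  choose i₀ hi₀ using h
  refine mk_le_mk_mul_of_mk_preimage_le i₀ fun i => ?_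
  let colours (β : i₀ ⁻¹' {i}) (t : {t : Finset σ // ∀ j ∈ t, j < i}) : C :=
    f (insert β.1 (t.1.image (chain f β.1)))
  have hcolours : Function.Injective colours := by
    rintro ⟨β, hβ⟩ ⟨β', hβ'⟩ heq
    have hchain := chain_eq_chain f (fun t ht => congrFun heq ⟨t, ht⟩) i le_rfl
    rw [mem_preimage, mem_singleton_iff] at hβ hβ'
    rw [Subtype.mk.injEq, ← hi₀ β, ← hi₀ β', hβ, hβ', hchain]
  have hsmall : #{t : Finset σ // ∀ j ∈ t, j < i} ≤ μ := by
    rw [← mk_congr (Equiv.finsetSubtypeComm _)]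
    exact (mk_finset_le_max _).trans (max_le hμ (hIio i))
  calc #(i₀ ⁻¹' {i}) ≤ #({t : Finset σ // ∀ j ∈ t, j < i} → C) := mk_le_of_injective hcolours
    _ = #C ^ #{t : Finset σ // ∀ j ∈ t, j < i} := (power_def _ _).symm
    _ ≤ #C ^ μ := power_le_power_left (mk_ne_zero_iff.mpr ⟨f ∅⟩) hsmall

end Chain

theorem exists_injective_endHomogeneous [DecidableEq α] {μ : Cardinal.{u}} (hμ : ℵ₀ ≤ μ)
    (hC : #C ≤ 2 ^ μ) (hα : 2 ^ μ < #α) (f : Finset α → C) :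
    ∃ (σ : Type u) (_ : LinearOrder σ) (g : σ → α) (F : Finset σ → C),
      μ < #σ ∧ Function.Injective g ∧
      ∀ l (t : Finset σ), (∀ j ∈ t, j < l) → f (insert (g l) (t.image g)) = F t := by
  have : Nonempty α := mk_ne_zero_iff.mp (ne_bot_of_gt hα)
  let σ := (Order.succ μ).ord.ToType
  have hσ : #σ = Order.succ μ := mk_ord_toType _
  by_cases h : ∃ β, ∀ i : σ, chain f β i ≠ β
  · obtain ⟨β, hβ⟩ := h
    have hmem := chain_mem_admissible f hβ
    refine ⟨σ, inferInstance, chain f β, fun t => f (insert β (t.image (chain f β))),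
      by rw [hσ]; exact Order.lt_succ μ, fun i j hij => ?_, fun l t ht => (hmem l).2 t ht⟩
    by_contra hne
    rcases lt_or_gt_of_ne hne with hlt | hlt
    · exact (hmem j).1 i hlt hij
    · exact (hmem i).1 j hlt hij.symm
  · push Not at h
    have hIio (i : σ) : #(Iio i) ≤ μ := by
      rw [← Order.lt_succ_iff]
      exact (mk_Iio_lt i (by rw [hσ, Ordinal.type_toType])).trans_eq hσ
    refine absurd hα (not_lt.mpr ?_)
    calc #α ≤ #σ * #C ^ μ := mk_le_mul_power_of_forall_exists_chain_eq f hμ hIio h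
      _ ≤ 2 ^ μ * (2 ^ μ) ^ μ := by
          gcongr
          · exact hσ ▸ Order.succ_le_of_lt (cantor μ)
          · exact power_le_power_right hC
      _ = 2 ^ μ := by rw [← power_mul, mul_eq_self hμ, mul_eq_self (hμ.trans (cantor μ).le)]

end ErdosRado

theorem erdos_rado {α C : Type u} {κ : Cardinal.{u}} (hκ : ℵ₀ ≤ κ) (hC : #C ≤ κ) (n : ℕ)
    (hα : (fun μ : Cardinal.{u} => 2 ^ μ)^[n] κ < #α) (f : Finset α → C) :
    ∃ H : Set α, κ < #H ∧ ∃ c, ∀ s : Finset α, ↑s ⊆ H → s.card = n + 1 → f s = c := by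
  classical
  induction n generalizing α with
  | zero =>
    obtain ⟨c, hc⟩ := infinite_pigeonhole_card (fun a => f {a}) (Order.succ κ)
      (Order.succ_le_of_lt hα) (hκ.trans (Order.le_succ κ))
      (hC.trans_lt ((Order.lt_succ κ).trans_le (isRegular_succ hκ).2.ge))
    refine ⟨_, Order.succ_le_iff.mp hc, c, fun s hs hcard => ?_⟩
    obtain ⟨a, rfl⟩ := Finset.card_eq_one.mp hcard
    exact hs (Finset.mem_singleton_self a)
  | succ n ih =>
    set μ := (fun μ : Cardinal.{u} => 2 ^ μ)^[n] κ
    have hκμ : κ ≤ μ := Function.id_le_iterate_of_id_le (fun x => (cantor x).le) n κ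
    rw [Function.iterate_succ_apply'] at hα
    obtain ⟨σ, _, g, F, hσ, hg, hF⟩ := ErdosRado.exists_injective_endHomogeneous
      (hκ.trans hκμ) (hC.trans (hκμ.trans (cantor μ).le)) hα f
    obtain ⟨H, hH, c, hc⟩ := ih hσ F
    refine ⟨g '' H, by rwa [mk_image_eq hg], c, fun s hs hcard => ?_⟩
    obtain ⟨u, huH, rfl⟩ := Finset.subset_set_image_iff.mp hs
    rw [Finset.card_image_of_injective _ hg] at hcard
    have hu : u.Nonempty := Finset.card_pos.mp (by omega)
    rw [← Finset.insert_erase (u.max'_mem hu), Finset.image_insert,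
      hF _ _ fun j hj => u.lt_max'_of_mem_erase_max' hu hj]
    refine hc _ ((Finset.coe_subset.mpr (u.erase_subset _)).trans huH) ?_
    rw [Finset.card_erase_of_mem (u.max'_mem hu), hcard, Nat.add_sub_cancel]

section Topology

variable {X : Type u} [TopologicalSpace X]

theorem aleph0_le_cellularity : ℵ₀ ≤ cellularity X := le_max_left _ _

theorem aleph0_le_piCharacter : ℵ₀ ≤ piCharacter X := le_max_left _ _

theorem mk_le_cellularity {𝒰 : Set (Set X)} (hopen : ∀ U ∈ 𝒰, IsOpen U ∧ U.Nonempty)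
    (hdisj : 𝒰.PairwiseDisjoint id) : #𝒰 ≤ cellularity X :=
  (le_ciSup bddAbove_of_small (⟨𝒰, hopen, hdisj⟩ : {𝒰 : Set (Set X) //
    (∀ U ∈ 𝒰, IsOpen U ∧ U.Nonempty) ∧ 𝒰.PairwiseDisjoint id})).trans (le_max_right _ _)

theorem exists_isLocalPiBase_mk_le_piCharacter (x : X) :
    ∃ B, IsLocalPiBase x B ∧ #B ≤ piCharacter X := by
  have hne : {κ | ∃ B : Set (Set X), IsLocalPiBase x B ∧ #B = κ}.Nonempty :=
    ⟨_, {U | IsOpen U ∧ U.Nonempty},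
      ⟨fun U hU => hU, fun V hV hxV => ⟨V, ⟨hV, x, hxV⟩, subset_rfl⟩⟩, rfl⟩
  obtain ⟨B, hB, hBcard⟩ := csInf_mem hne
  exact ⟨B, hB, hBcard ▸ (le_ciSup bddAbove_of_small x).trans (le_max_right _ _)⟩

theorem mk_le_cellularity_of_eq_of_inter_nonempty {ι : Type u} (V : ι → Set X)
    (hV : ∀ i, IsOpen (V i) ∧ (V i).Nonempty)
    (hdisj : ∀ i j, (V i ∩ V j).Nonempty → V i = V j)
    (hfibre : ∀ i j k, V i = V j → V i = V k → i = j ∨ i = k ∨ j = k) :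
    #ι ≤ cellularity X := by
  have hrange : #(range V) ≤ cellularity X := by
    refine mk_le_cellularity ?_ fun _ ⟨i, hi⟩ _ ⟨j, hj⟩ hne => ?_
    · rintro _ ⟨i, rfl⟩
      exact hV i
    · subst hi hj
      rw [Function.onFun, id, id, disjoint_iff_inter_eq_empty, ← not_nonempty_iff_eq_empty]
      exact fun h => hne (hdisj i j h)
  have hfibre' (S : range V) : #(rangeFactorization V ⁻¹' {S}) ≤ 2 := by
    refine mk_le_two_of_forall_eq_or_eq fun i hi j hj k hk => ?_
    simp only [mem_preimage, mem_singleton_iff, Subtype.ext_iff, rangeFactorization] at hi hj hk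
    exact hfibre i j k (hi.trans hj.symm) (hi.trans hk.symm)
  calc #ι ≤ #(range V) * 2 := mk_le_mk_mul_of_mk_preimage_le _ hfibre'
    _ ≤ cellularity X * cellularity X := mul_le_mul' hrange (by
        exact_mod_cast (natCast_lt_aleph0 (n := 2)).le.trans aleph0_le_cellularity)
    _ = cellularity X := mul_eq_self aleph0_le_cellularity

theorem mk_le_cellularity_of_inter_inter_eq_empty {ι : Type u} (G : ι → Set X)
    (hG : ∀ i, IsOpen (G i) ∧ (G i).Nonempty)
    (h : ∀ i j k, i ≠ j → i ≠ k → j ≠ k → G i ∩ G j ∩ G k = ∅) : #ι ≤ cellularity X := by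
  have hmem {q : X} {i j k : ι} (hi : q ∈ G i) (hj : q ∈ G j) (hk : q ∈ G k) :
      i = j ∨ i = k ∨ j = k := by
    by_contra! hne
    exact (h i j k hne.1 hne.2.1 hne.2.2).subset ⟨⟨hi, hj⟩, hk⟩
  -- `w i` is an index `j ≠ i` with `G j` meeting `G i`, or `i` itself if there is none.
  have hpartner (i : ι) : ∃ w, (G i ∩ G w).Nonempty ∧
      ∀ j ≠ i, (G i ∩ G j).Nonempty → w ≠ i := by
    by_cases hi : ∃ j ≠ i, (G i ∩ G j).Nonempty
    · obtain ⟨j, hji, hij⟩ := hi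
      exact ⟨j, hij, fun _ _ _ => hji⟩
    · push Not at hi
      exact ⟨i, by simpa using (hG i).2, fun j hj hij => absurd (hi j hj) hij.ne_empty⟩
  choose w hw hw_ne using hpartner
  refine mk_le_cellularity_of_eq_of_inter_nonempty (fun i => G i ∩ G (w i))
    (fun i => ⟨(hG i).1.inter (hG (w i)).1, hw i⟩) (fun i j hV => ?_)
    (fun i j k hj hk => ?_)
  · obtain ⟨q, ⟨hqi, hqwi⟩, hqj, hqwj⟩ := hV
    rcases eq_or_ne i j with rfl | hij
    · rfl
    have hj : j = w i := by
      rcases hmem hqi hqwi hqj with h | h | h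
      exacts [absurd h.symm (hw_ne i j hij.symm ⟨q, hqi, hqj⟩), absurd h hij, h.symm]
    have hi : i = w j := by
      rcases hmem hqj hqwj hqi with h | h | h
      exacts [absurd h.symm (hw_ne j i hij ⟨q, hqj, hqi⟩), absurd h hij.symm, h.symm]
    simp only [← hi, ← hj, inter_comm]
  · obtain ⟨q, hq⟩ := hw i
    exact hmem hq.1 (hj ▸ hq).1 (hk ▸ hq).1

theorem ThreeHausdorff.exists_biInter_image_eq_empty (h3 : ThreeHausdorff X) {p : X}
    {B : Set (Set X)} (hB : IsLocalPiBase p B) (φ : X → X ≃ₜ X) (hφ : ∀ x, φ x p = x)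
    {s : Finset X} (hs : s.card = 3) : ∃ b ∈ B, ⋂ x ∈ s, φ x '' b = ∅ := by
  classical
  obtain ⟨x, y, z, hxy, hxz, hyz, rfl⟩ := Finset.card_eq_three.mp hs
  obtain ⟨U, V, W, hU, hV, hW, hxU, hyV, hzW, hUVW⟩ := h3 x y z hxy hxz hyz
  have hN : IsOpen (φ x ⁻¹' U ∩ φ y ⁻¹' V ∩ φ z ⁻¹' W) :=
    (((φ x).continuous.isOpen_preimage _ hU).inter ((φ y).continuous.isOpen_preimage _ hV)).inter
      ((φ z).continuous.isOpen_preimage _ hW)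
  obtain ⟨b, hbB, hbN⟩ := hB.2 _ hN ⟨⟨by simpa [hφ], by simpa [hφ]⟩, by simpa [hφ]⟩
  refine ⟨b, hbB, subset_empty_iff.mp (hUVW ▸ ?_)⟩
  simp only [Finset.set_biInter_insert, Finset.set_biInter_singleton]
  rintro q ⟨⟨a, ha, rfl⟩, ⟨c, hc, hca⟩, ⟨d, hd, hda⟩⟩
  exact ⟨⟨(hbN ha).1.1, hca ▸ (hbN hc).1.2⟩, hda ▸ (hbN hd).2⟩

end Topology

theorem stmt10 (X : Type u) [TopologicalSpace X]
    (h3 : ThreeHausdorff X) (hhom : Homogeneous X) :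
    #X ≤ 2 ^ ((2 : Cardinal) ^ (cellularity X * piCharacter X)) := by
  classical
  by_contra! hlt
  set κ := cellularity X * piCharacter X
  have hcκ : cellularity X ≤ κ :=
    le_mul_of_one_le_right' (one_le_aleph0.trans aleph0_le_piCharacter)
  have hπκ : piCharacter X ≤ κ :=
    le_mul_of_one_le_left' (one_le_aleph0.trans aleph0_le_cellularity)
  obtain ⟨p⟩ : Nonempty X := mk_ne_zero_iff.mp (ne_bot_of_gt hlt)
  obtain ⟨B, hB, hBκ⟩ := exists_isLocalPiBase_mk_le_piCharacter p
  choose φ hφ using hhom p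
  obtain ⟨b₀, hb₀⟩ := hB.2 univ isOpen_univ trivial
  have hcolour (s : Finset X) : ∃ b : B, s.card = 3 → ⋂ x ∈ s, φ x '' b = ∅ := by
    by_cases hs : s.card = 3
    · obtain ⟨b, hb, hsep⟩ := h3.exists_biInter_image_eq_empty hB φ hφ hs
      exact ⟨⟨b, hb⟩, fun _ => hsep⟩
    · exact ⟨⟨b₀, hb₀.1⟩, fun h => absurd h hs⟩
  choose colour hcolour using hcolour
  obtain ⟨H, hH, c, hc⟩ :=
    erdos_rado (aleph0_le_cellularity.trans hcκ) (hBκ.trans hπκ) 2 hlt colour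
  refine hH.not_ge (le_trans ?_ hcκ)
  refine mk_le_cellularity_of_inter_inter_eq_empty (fun x : H => φ x '' c)
    (fun x => ⟨(φ x).isOpen_image.mpr (hB.1 c c.2).1, (hB.1 c c.2).2.image _⟩)
    fun x y z hxy hxz hyz => ?_
  have hcard : ({x.1, y.1, z.1} : Finset X).card = 3 := Finset.card_eq_three.mpr
    ⟨x, y, z, Subtype.coe_ne_coe.mpr hxy, Subtype.coe_ne_coe.mpr hxz,
      Subtype.coe_ne_coe.mpr hyz, rfl⟩
  have hsep := hcolour _ hcard
  rw [hc _ (by simp [insert_subset_iff]) hcard] at hsep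
  simpa [Finset.set_biInter_insert, inter_assoc] using hsep
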